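/- arXiv:1109.4007 — 4 statements merged into one kernel-verified Lean document; each statement's English description precedes it below -/
import Mathlib

section
/- For V ≥ 2, the tail sum Σ_{k > V} 2^{ω(k)}/(k²·φ(k)) is O((log V)/V²). -/
/-!
Write `w(e) = μ(e)² 2^ω(e) / φ(e)` and `τ` for the divisor-counting function. Expanding
`k / φ(k) = ∏_{p ∣ k} (1 + 1/(p - 1))` over the squarefree divisors `e` of `k`, and using
`2^ω(k) ≤ 2^ω(e) τ(k/e)`, gives `2^ω(k) k / φ(k) ≤ (w ∗ τ)(k)`. Hence the tail is at most
`∑_a w(a)/a³ ∑_{b > V/a} τ(b)/b³`. Writing `τ = 1 ∗ 1` once more and splitting at `a ≤ y`,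
`∑_{b > y} τ(b)/b³ ≤ (6 + 2 log y)/y²` for `y ≥ 1`, so the tail is `≪ (log V / V²) ∑_a w(a)/a`.
The last series converges: for squarefree `a`, `a ≤ 2^ω(a) φ(a)`, so `w(a)/a ≤ 4^ω(a)/a²`, which
is dominated by the convolution square of `2^ω(n)/n² ≤ τ(n)/n²`.
-/

open Finset

theorem sum_sum_divisorsAntidiagonal_le {f g : ℕ → ℝ} (hf : ∀ n, 0 ≤ f n) {P : ℕ → Prop}
    {s : Finset ℕ} (hs : ∀ k ∈ s, P k) {B : ℕ → ℝ}
    (hB : ∀ a, 0 < a → ∀ t : Finset ℕ, (∀ b ∈ t, P (a * b)) → ∑ b ∈ t, g b ≤ B a) :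
    ∑ k ∈ s, ∑ p ∈ k.divisorsAntidiagonal, f p.1 * g p.2 ≤
      ∑ a ∈ s.biUnion Nat.divisors, f a * B a := by
  simp_rw [Nat.sum_divisorsAntidiagonal (fun a b => f a * g b)]
  rw [sum_comm' (t' := s.biUnion Nat.divisors) (s' := fun a => {k ∈ s | a ∈ k.divisors})
    (fun k a => by simp only [mem_filter, mem_biUnion]; grind)]
  gcongr with a ha
  have ha0 : 0 < a := by
    obtain ⟨k, -, hak⟩ := mem_biUnion.1 ha
    exact Nat.pos_of_mem_divisors hak
  rw [← mul_sum, ← sum_image (g := (· / a)) fun k hk k' hk' h => by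
    rw [mem_coe, mem_filter, Nat.mem_divisors] at hk hk'
    exact Nat.div_left_inj hk.2.1 hk'.2.1 |>.1 h]
  gcongr
  · exact hf a
  refine hB a ha0 _ fun b hb => ?_
  obtain ⟨k, hk, rfl⟩ := mem_image.1 hb
  rw [mem_filter, Nat.mem_divisors] at hk
  rw [Nat.mul_div_cancel' hk.2.1]
  exact hs k hk.1

theorem sum_inv_sq_le_of_lt (m : ℕ) {t : Finset ℕ} (ht : ∀ b ∈ t, b ≠ 0 → m < b) :
    ∑ b ∈ t, ((b : ℝ) ^ 2)⁻¹ ≤ 2 / (m + 1) := by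
  rw [← sum_filter_of_ne (p := (· ≠ 0)) fun b _ hb h => by simp [h] at hb]
  refine le_trans ?_ (sum_Ioo_inv_sq_le m (t.sup id + 1))
  refine sum_le_sum_of_subset_of_nonneg (fun b hb => ?_) fun _ _ _ => by positivity
  rw [mem_filter] at hb
  exact mem_Ioo.2 ⟨ht b hb.1 hb.2, Nat.lt_succ_of_le (le_sup (f := id) hb.1)⟩

theorem sum_inv_sq_le_two (t : Finset ℕ) : ∑ b ∈ t, ((b : ℝ) ^ 2)⁻¹ ≤ 2 := by
  simpa using sum_inv_sq_le_of_lt 0 (t := t) fun b _ hb => Nat.pos_of_ne_zero hb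

theorem sum_inv_pow_three_le {z : ℝ} {t : Finset ℕ} (ht : ∀ b ∈ t, z < b) :
    ∑ b ∈ t, ((b : ℝ) ^ 3)⁻¹ ≤ 2 / max z 1 ^ 2 := by
  set m := ⌊z⌋₊
  have hmt : ∀ b ∈ t, b ≠ 0 → m < b := fun b hb hb0 => (Nat.floor_lt' hb0).2 (ht b hb)
  calc ∑ b ∈ t, ((b : ℝ) ^ 3)⁻¹ ≤ ∑ b ∈ t, (m + 1 : ℝ)⁻¹ * ((b : ℝ) ^ 2)⁻¹ := by
        refine sum_le_sum fun b hb => ?_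
        rcases eq_or_ne b 0 with rfl | hb0
        · simp
        have hmb : (m + 1 : ℝ) ≤ b := by exact_mod_cast hmt b hb hb0
        rw [← mul_inv, pow_succ' (b : ℝ) 2]
        gcongr
    _ ≤ (m + 1 : ℝ)⁻¹ * (2 / (m + 1)) := by
        rw [← mul_sum]
        gcongr
        exact sum_inv_sq_le_of_lt m hmt
    _ = 2 / (m + 1) ^ 2 := by field_simp
    _ ≤ 2 / max z 1 ^ 2 := by
        have : max z 1 ≤ m + 1 := max_le (Nat.lt_floor_add_one z).le (by simp)
        gcongr

theorem sum_inv_le_one_add_log {y : ℝ} (hy : 1 ≤ y) {t : Finset ℕ} (ht : ∀ a ∈ t, (a : ℝ) ≤ y) :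
    ∑ a ∈ t, (a : ℝ)⁻¹ ≤ 1 + Real.log y := by
  rw [← sum_filter_of_ne (p := (· ≠ 0)) fun b _ hb h => by simp [h] at hb]
  have hn : 0 < ⌊y⌋₊ := Nat.floor_pos.2 hy
  calc ∑ a ∈ t with a ≠ 0, (a : ℝ)⁻¹ ≤ ∑ a ∈ Icc 1 ⌊y⌋₊, (a : ℝ)⁻¹ := by
        refine sum_le_sum_of_subset_of_nonneg (fun a ha => ?_) fun _ _ _ => by positivity
        rw [mem_filter] at ha
        exact mem_Icc.2 ⟨Nat.one_le_iff_ne_zero.2 ha.2, Nat.le_floor (ht a ha.1)⟩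
    _ = harmonic ⌊y⌋₊ := by
        simp only [harmonic_eq_sum_Icc, Rat.cast_sum, Rat.cast_inv, Rat.cast_natCast]
    _ ≤ 1 + Real.log ⌊y⌋₊ := harmonic_le_one_add_log _
    _ ≤ 1 + Real.log y := by
        gcongr
        exact Nat.floor_le (by linarith)

theorem card_primeFactors_mul_le (a b : ℕ) :
    (a * b).primeFactors.card ≤ a.primeFactors.card + b.primeFactors.card := by
  rcases eq_or_ne a 0 with rfl | ha
  · simp
  rcases eq_or_ne b 0 with rfl | hb
  · simp
  rw [Nat.primeFactors_mul ha hb]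
  exact card_union_le _ _

theorem two_pow_card_primeFactors_le_card_divisors {n : ℕ} (hn : n ≠ 0) :
    2 ^ n.primeFactors.card ≤ n.divisors.card := by
  rw [Nat.card_divisors hn, ← prod_const]
  refine prod_le_prod' fun p hp => ?_
  have : n.factorization p ≠ 0 := by rwa [← Finsupp.mem_support_iff, Nat.support_factorization]
  omega

theorem two_pow_card_primeFactors_mul_le (a : ℕ) {b : ℕ} (hb : b ≠ 0) :
    2 ^ (a * b).primeFactors.card ≤ 2 ^ a.primeFactors.card * b.divisors.card :=
  calc 2 ^ (a * b).primeFactors.card ≤ 2 ^ a.primeFactors.card * 2 ^ b.primeFactors.card := by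
        rw [← pow_add]
        exact Nat.pow_le_pow_right two_pos (card_primeFactors_mul_le a b)
    _ ≤ 2 ^ a.primeFactors.card * b.divisors.card := by
        gcongr
        exact two_pow_card_primeFactors_le_card_divisors hb

theorem totient_prod_of_prime {s : Finset ℕ} (hs : ∀ p ∈ s, p.Prime) :
    (∏ p ∈ s, p).totient = ∏ p ∈ s, (p - 1) := by
  have h := Nat.totient_mul_prod_primeFactors (∏ p ∈ s, p)
  rw [Nat.primeFactors_prod hs] at h
  exact Nat.eq_of_mul_eq_mul_right (prod_pos fun p hp => (hs p hp).pos) (by linarith)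

theorem le_two_pow_card_primeFactors_mul_totient {e : ℕ} (he : Squarefree e) :
    e ≤ 2 ^ e.primeFactors.card * e.totient := by
  have hprod := Nat.prod_primeFactors_of_squarefree he
  calc e = ∏ p ∈ e.primeFactors, p := hprod.symm
    _ ≤ ∏ p ∈ e.primeFactors, 2 * (p - 1) := by
        refine prod_le_prod' fun p hp => ?_
        have := (Nat.prime_of_mem_primeFactors hp).two_le
        omega
    _ = 2 ^ e.primeFactors.card * e.totient := by
        rw [prod_mul_distrib, prod_const, ← totient_prod_of_prime fun p hp =>
          Nat.prime_of_mem_primeFactors hp, hprod]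

theorem cast_totient_prod_of_prime {s : Finset ℕ} (hs : ∀ p ∈ s, p.Prime) :
    ((∏ p ∈ s, p).totient : ℝ) = ∏ p ∈ s, ((p : ℝ) - 1) := by
  rw [totient_prod_of_prime hs, Nat.cast_prod]
  exact prod_congr rfl fun p hp => by rw [Nat.cast_pred (hs p hp).pos]

theorem div_totient_eq_prod_one_add {k : ℕ} (hk : k ≠ 0) :
    (k : ℝ) / k.totient = ∏ p ∈ k.primeFactors, (1 + ((p : ℝ) - 1)⁻¹) := by
  have hprime : ∀ p ∈ k.primeFactors, p.Prime := fun p hp => Nat.prime_of_mem_primeFactors hp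
  have hsub : ∀ p ∈ k.primeFactors, (0 : ℝ) < p - 1 := fun p hp => by
    simpa using (hprime p hp).one_lt
  have h : (k.totient : ℝ) * ∏ p ∈ k.primeFactors, (p : ℝ) =
      k * ∏ p ∈ k.primeFactors, ((p : ℝ) - 1) := by
    have := congrArg (Nat.cast (R := ℝ)) (Nat.totient_mul_prod_primeFactors k)
    push_cast at this
    rwa [prod_congr rfl fun p hp => Nat.cast_pred (hprime p hp).pos] at this
  have hφ : (0 : ℝ) < k.totient := by exact_mod_cast Nat.totient_pos.2 (Nat.pos_of_ne_zero hk)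
  rw [prod_congr rfl fun (p : ℕ) hp => (show 1 + ((p : ℝ) - 1)⁻¹ = p / (p - 1) by
    field_simp [(hsub p hp).ne']; ring), prod_div_distrib,
    div_eq_div_iff hφ.ne' (prod_pos hsub).ne']
  linarith

noncomputable def squarefreeWeight (e : ℕ) : ℝ :=
  if Squarefree e then 2 ^ e.primeFactors.card / e.totient else 0

theorem squarefreeWeight_nonneg (e : ℕ) : 0 ≤ squarefreeWeight e := by
  unfold squarefreeWeight
  split_ifs <;> positivity

theorem two_pow_mul_div_totient_le {k : ℕ} (hk : k ≠ 0) :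
    2 ^ k.primeFactors.card * ((k : ℝ) / k.totient) ≤
      ∑ p ∈ k.divisorsAntidiagonal, squarefreeWeight p.1 * p.2.divisors.card := by
  have hprime : ∀ I ∈ k.primeFactors.powerset, ∀ p ∈ I, p.Prime := fun I hI p hp =>
    Nat.prime_of_mem_primeFactors (mem_powerset.1 hI hp)
  rw [Nat.sum_divisorsAntidiagonal (fun a b => squarefreeWeight a * b.divisors.card)]
  simp only [squarefreeWeight, ite_mul, zero_mul]
  rw [← sum_filter, Nat.sum_divisors_filter_squarefree hk, Nat.factors_eq, List.toFinset_coe,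
    Nat.toFinset_factors, div_totient_eq_prod_one_add hk, prod_one_add, mul_sum]
  refine sum_le_sum fun I hI => ?_
  have hdvd : ∏ p ∈ I, p ∣ k :=
    (prod_dvd_prod_of_subset _ _ _ (mem_powerset.1 hI)).trans (Nat.prod_primeFactors_dvd k)
  have hquot : k / ∏ p ∈ I, p ≠ 0 :=
    (Nat.div_pos (Nat.le_of_dvd (Nat.pos_of_ne_zero hk) hdvd)
      (prod_pos fun p hp => (hprime I hI p hp).pos)).ne'
  have hnat := two_pow_card_primeFactors_mul_le (∏ p ∈ I, p) hquot
  rw [Nat.mul_div_cancel' hdvd] at hnat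
  rw [prod_val, Function.id_def, cast_totient_prod_of_prime (hprime I hI), prod_inv_distrib,
    div_mul_eq_mul_div, div_eq_mul_inv]
  refine mul_le_mul_of_nonneg_right (by exact_mod_cast hnat) (inv_nonneg.2 (prod_nonneg fun p hp =>
    sub_nonneg.2 (by exact_mod_cast (hprime I hI p hp).one_lt.le)))

theorem card_divisors_div_pow_eq_sum (c n : ℕ) :
    (c.divisors.card : ℝ) / (c : ℝ) ^ n =
      ∑ p ∈ c.divisorsAntidiagonal, ((p.1 : ℝ) ^ n)⁻¹ * ((p.2 : ℝ) ^ n)⁻¹ := by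
  rw [Nat.sum_divisorsAntidiagonal (fun a b => ((a : ℝ) ^ n)⁻¹ * ((b : ℝ) ^ n)⁻¹),
    sum_congr rfl fun a ha => by
      rw [← mul_inv, ← mul_pow, ← Nat.cast_mul, Nat.mul_div_cancel' (Nat.dvd_of_mem_divisors ha)],
    sum_const, nsmul_eq_mul, div_eq_mul_inv]

theorem sum_card_divisors_div_sq_le (t : Finset ℕ) :
    ∑ n ∈ t, (n.divisors.card : ℝ) / (n : ℝ) ^ 2 ≤ 4 := by
  simp_rw [card_divisors_div_pow_eq_sum]
  calc _ ≤ ∑ a ∈ t.biUnion Nat.divisors, ((a : ℝ) ^ 2)⁻¹ * 2 :=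
        sum_sum_divisorsAntidiagonal_le (P := fun _ => True) (fun _ => by positivity)
          (fun _ _ => trivial) fun _ _ t' _ => sum_inv_sq_le_two t'
    _ ≤ 2 * 2 := by
        rw [← sum_mul]
        gcongr
        exact sum_inv_sq_le_two _
    _ = 4 := by norm_num

theorem sum_two_pow_card_primeFactors_div_sq_le (t : Finset ℕ) :
    ∑ n ∈ t, (2 : ℝ) ^ n.primeFactors.card / (n : ℝ) ^ 2 ≤ 4 := by
  refine le_trans (sum_le_sum fun n _ => ?_) (sum_card_divisors_div_sq_le t)
  rcases eq_or_ne n 0 with rfl | hn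
  · simp
  gcongr
  exact_mod_cast two_pow_card_primeFactors_le_card_divisors hn

theorem sum_inv_pow_three_mul_two_div_max_sq_le (z : ℝ) (A : Finset ℕ) :
    ∑ a ∈ A, ((a : ℝ) ^ 3)⁻¹ * (2 / max (z / a) 1 ^ 2) ≤
      (6 + 2 * Real.log (max z 1)) / max z 1 ^ 2 := by
  set M := max z 1
  have hM : 1 ≤ M := le_max_right z 1
  have hsmall : ∀ a : ℕ, ((a : ℝ) ^ 3)⁻¹ * (2 / max (z / a) 1 ^ 2) ≤ 2 / M ^ 2 * (a : ℝ)⁻¹ := by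
    intro a
    rcases eq_or_ne a 0 with rfl | ha
    · simp
    have ha' : (1 : ℝ) ≤ a := by exact_mod_cast Nat.one_le_iff_ne_zero.2 ha
    have : M / a ≤ max (z / a) 1 := by
      rw [← max_div_div_right (c := (a : ℝ)) (by positivity)]
      exact max_le_max le_rfl (div_le_one_of_le₀ ha' (by positivity))
    calc ((a : ℝ) ^ 3)⁻¹ * (2 / max (z / a) 1 ^ 2) ≤ ((a : ℝ) ^ 3)⁻¹ * (2 / (M / a) ^ 2) := by
          gcongr
      _ = 2 / M ^ 2 * (a : ℝ)⁻¹ := by field_simp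
  have hlarge : ∀ a : ℕ, ((a : ℝ) ^ 3)⁻¹ * (2 / max (z / a) 1 ^ 2) ≤ 2 * ((a : ℝ) ^ 3)⁻¹ := by
    intro a
    rw [mul_comm]
    gcongr
    exact div_le_self zero_le_two (one_le_pow₀ (le_max_right _ _))
  rw [← sum_filter_add_sum_filter_not _ (fun a : ℕ => (a : ℝ) ≤ M)]
  calc _ ≤ 2 / M ^ 2 * (1 + Real.log M) + 2 * (2 / max M 1 ^ 2) := by
        gcongr
        · refine (sum_le_sum fun a _ => hsmall a).trans ?_
          rw [← mul_sum]
          gcongr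
          exact sum_inv_le_one_add_log hM fun a ha => (mem_filter.1 ha).2
        · refine (sum_le_sum fun a _ => hlarge a).trans ?_
          rw [← mul_sum]
          gcongr
          exact sum_inv_pow_three_le fun a ha => lt_of_not_ge (mem_filter.1 ha).2
    _ = (6 + 2 * Real.log M) / M ^ 2 := by
        rw [max_eq_left hM]
        field_simp
        ring

theorem sum_card_divisors_div_pow_three_le {z : ℝ} {t : Finset ℕ} (ht : ∀ c ∈ t, z < c) :
    ∑ c ∈ t, (c.divisors.card : ℝ) / (c : ℝ) ^ 3 ≤
      (6 + 2 * Real.log (max z 1)) / max z 1 ^ 2 := by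
  simp_rw [card_divisors_div_pow_eq_sum]
  refine (sum_sum_divisorsAntidiagonal_le (f := fun a => ((a : ℝ) ^ 3)⁻¹) (P := (z < ·))
    (B := fun a => 2 / max (z / a) 1 ^ 2) (fun _ => by positivity) ht
    fun a ha t' ht' => sum_inv_pow_three_le fun b hb => ?_).trans
    (sum_inv_pow_three_mul_two_div_max_sq_le z _)
  rw [div_lt_iff₀' (by exact_mod_cast ha)]
  exact_mod_cast ht' b hb

theorem squarefreeWeight_div_le (e : ℕ) :
    squarefreeWeight e / e ≤ ∑ p ∈ e.divisorsAntidiagonal,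
      (2 : ℝ) ^ p.1.primeFactors.card / (p.1 : ℝ) ^ 2 *
        ((2 : ℝ) ^ p.2.primeFactors.card / (p.2 : ℝ) ^ 2) := by
  unfold squarefreeWeight
  split_ifs with he
  swap
  · rw [zero_div]
    exact sum_nonneg fun _ _ => by positivity
  have he0 : e ≠ 0 := he.ne_zero
  have hle : (e : ℝ) ≤ 2 ^ e.primeFactors.card * e.totient := by
    exact_mod_cast le_two_pow_card_primeFactors_mul_totient he
  calc (2 : ℝ) ^ e.primeFactors.card / e.totient / e
      ≤ 2 ^ e.primeFactors.card * (2 ^ e.primeFactors.card / (e : ℝ) ^ 2) := by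
        rw [div_div, mul_div_assoc', div_le_div_iff₀ (by positivity) (by positivity)]
        calc (2 : ℝ) ^ e.primeFactors.card * e ^ 2 = 2 ^ e.primeFactors.card * (e * e) := by ring
          _ ≤ 2 ^ e.primeFactors.card * ((2 ^ e.primeFactors.card * e.totient) * e) := by gcongr
          _ = _ := by ring
    _ ≤ e.divisors.card * (2 ^ e.primeFactors.card / (e : ℝ) ^ 2) := by
        gcongr
        exact_mod_cast two_pow_card_primeFactors_le_card_divisors he0
    _ = ∑ _p ∈ e.divisorsAntidiagonal, 2 ^ e.primeFactors.card / (e : ℝ) ^ 2 := by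
        rw [Nat.sum_divisorsAntidiagonal (fun _ _ => 2 ^ e.primeFactors.card / (e : ℝ) ^ 2),
          sum_const, nsmul_eq_mul]
    _ ≤ _ := sum_le_sum fun p hp => by
        rw [← (Nat.mem_divisorsAntidiagonal.1 hp).1, div_mul_div_comm, ← pow_add, ← mul_pow,
          Nat.cast_mul]
        gcongr
        · exact one_le_two
        · exact card_primeFactors_mul_le _ _

theorem sum_squarefreeWeight_div_le (t : Finset ℕ) :
    ∑ e ∈ t, squarefreeWeight e / e ≤ 16 :=
  calc _ ≤ ∑ e ∈ t, ∑ p ∈ e.divisorsAntidiagonal,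
        (2 : ℝ) ^ p.1.primeFactors.card / (p.1 : ℝ) ^ 2 *
          ((2 : ℝ) ^ p.2.primeFactors.card / (p.2 : ℝ) ^ 2) :=
        sum_le_sum fun e _ => squarefreeWeight_div_le e
    _ ≤ ∑ a ∈ t.biUnion Nat.divisors, (2 : ℝ) ^ a.primeFactors.card / (a : ℝ) ^ 2 * 4 :=
        sum_sum_divisorsAntidiagonal_le (f := fun a => (2 : ℝ) ^ a.primeFactors.card / (a : ℝ) ^ 2)
          (g := fun b => (2 : ℝ) ^ b.primeFactors.card / (b : ℝ) ^ 2) (P := fun _ => True)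
          (fun _ => by positivity) (fun _ _ => trivial) fun _ _ t' _ =>
            sum_two_pow_card_primeFactors_div_sq_le t'
    _ ≤ 4 * 4 := by
        rw [← sum_mul]
        gcongr
        exact sum_two_pow_card_primeFactors_div_sq_le _
    _ = 16 := by norm_num

theorem two_pow_card_primeFactors_div_sq_mul_totient_le {k : ℕ} (hk : k ≠ 0) :
    (2 : ℝ) ^ k.primeFactors.card / ((k : ℝ) ^ 2 * k.totient) ≤
      ∑ p ∈ k.divisorsAntidiagonal,
        squarefreeWeight p.1 / (p.1 : ℝ) ^ 3 * (p.2.divisors.card / (p.2 : ℝ) ^ 3) := by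
  calc (2 : ℝ) ^ k.primeFactors.card / ((k : ℝ) ^ 2 * k.totient)
      = 2 ^ k.primeFactors.card * ((k : ℝ) / k.totient) / (k : ℝ) ^ 3 := by
        field_simp
    _ ≤ (∑ p ∈ k.divisorsAntidiagonal, squarefreeWeight p.1 * p.2.divisors.card) / (k : ℝ) ^ 3 := by
        gcongr
        exact two_pow_mul_div_totient_le hk
    _ = _ := by
        rw [sum_div]
        refine sum_congr rfl fun p hp => ?_
        rw [div_mul_div_comm, ← mul_pow, ← Nat.cast_mul, (Nat.mem_divisorsAntidiagonal.1 hp).1]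

theorem div_pow_three_mul_log_div_max_sq_le {V : ℝ} (hV : 1 ≤ V) {x : ℝ} (hx : 0 ≤ x) (a : ℕ) :
    x / (a : ℝ) ^ 3 * ((6 + 2 * Real.log (max (V / a) 1)) / max (V / a) 1 ^ 2) ≤
      x / a * ((6 + 2 * Real.log V) / V ^ 2) := by
  rcases eq_or_ne a 0 with rfl | ha
  · simp
  have ha' : (1 : ℝ) ≤ a := by exact_mod_cast Nat.one_le_iff_ne_zero.2 ha
  have hmax : max (V / a) 1 ≤ V := max_le (div_le_self (by linarith) ha') hV
  calc x / (a : ℝ) ^ 3 * ((6 + 2 * Real.log (max (V / a) 1)) / max (V / a) 1 ^ 2)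
      ≤ x / (a : ℝ) ^ 3 * ((6 + 2 * Real.log V) / (V / a) ^ 2) := by
        refine mul_le_mul_of_nonneg_left (div_le_div₀ ?_ ?_ (by positivity) ?_) (by positivity)
        · linarith [Real.log_nonneg hV]
        · linarith [Real.log_le_log (by positivity) hmax]
        · exact pow_le_pow_left₀ (by positivity) (le_max_left _ _) 2
    _ = x / a * ((6 + 2 * Real.log V) / V ^ 2) := by
        field_simp

theorem sum_two_pow_card_primeFactors_div_sq_mul_totient_le {V : ℝ} (hV : 1 ≤ V)
    {s : Finset ℕ} (hs : ∀ k ∈ s, V < k) :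
    ∑ k ∈ s, (2 : ℝ) ^ k.primeFactors.card / ((k : ℝ) ^ 2 * k.totient) ≤
      16 * ((6 + 2 * Real.log V) / V ^ 2) := by
  have hlog : 0 ≤ Real.log V := Real.log_nonneg hV
  calc _ ≤ ∑ k ∈ s, ∑ p ∈ k.divisorsAntidiagonal,
        squarefreeWeight p.1 / (p.1 : ℝ) ^ 3 * (p.2.divisors.card / (p.2 : ℝ) ^ 3) :=
        sum_le_sum fun k hk => two_pow_card_primeFactors_div_sq_mul_totient_le
          (Nat.cast_ne_zero.1 (by linarith [hs k hk] : (0 : ℝ) < k).ne')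
    _ ≤ ∑ a ∈ s.biUnion Nat.divisors, squarefreeWeight a / (a : ℝ) ^ 3 *
          ((6 + 2 * Real.log (max (V / a) 1)) / max (V / a) 1 ^ 2) :=
        sum_sum_divisorsAntidiagonal_le (f := fun a => squarefreeWeight a / (a : ℝ) ^ 3)
          (g := fun b => b.divisors.card / (b : ℝ) ^ 3) (P := (V < ·))
          (B := fun a => (6 + 2 * Real.log (max (V / a) 1)) / max (V / a) 1 ^ 2)
          (fun a => div_nonneg (squarefreeWeight_nonneg a) (by positivity)) hs
          fun a ha t ht => sum_card_divisors_div_pow_three_le fun b hb => by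
            rw [div_lt_iff₀' (by exact_mod_cast ha)]
            exact_mod_cast ht b hb
    _ ≤ ∑ a ∈ s.biUnion Nat.divisors, squarefreeWeight a / a * ((6 + 2 * Real.log V) / V ^ 2) :=
        sum_le_sum fun a _ =>
          div_pow_three_mul_log_div_max_sq_le hV (squarefreeWeight_nonneg a) a
    _ ≤ 16 * ((6 + 2 * Real.log V) / V ^ 2) := by
        rw [← sum_mul]
        gcongr
        exact sum_squarefreeWeight_div_le _

/-- For `V ≥ 2`, `Σ_{k > V} 2^{ω(k)}/(k²·φ(k)) = O((log V)/V²)`. -/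
theorem stmt3 :
    ∃ C : ℝ, ∀ V : ℕ, 2 ≤ V →
      (∑' k : ℕ, if k ≤ V then (0 : ℝ)
        else (2 : ℝ) ^ k.primeFactors.card / ((k : ℝ) ^ 2 * (Nat.totient k)))
        ≤ C * Real.log V / (V : ℝ) ^ 2 := by
  refine ⟨224, fun V hV => ?_⟩
  have hV' : (2 : ℝ) ≤ V := by exact_mod_cast hV
  have hlog : 1 / 2 ≤ Real.log V :=
    (Real.log_two_gt_d9.trans_le (Real.log_le_log two_pos hV')).le.trans' (by norm_num)
  have hbound : 16 * ((6 + 2 * Real.log V) / (V : ℝ) ^ 2) ≤ 224 * Real.log V / (V : ℝ) ^ 2 := by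
    rw [← mul_div_assoc]
    exact div_le_div_of_nonneg_right (by linarith) (by positivity)
  refine tsum_le_of_sum_le' ((by positivity : (0 : ℝ) ≤ 16 * ((6 + 2 * Real.log V) / V ^ 2)).trans
    hbound) fun s => ?_
  rw [sum_ite, sum_const_zero, zero_add]
  refine (sum_two_pow_card_primeFactors_div_sq_mul_totient_le (by linarith) fun k hk => ?_).trans
    hbound
  exact_mod_cast lt_of_not_ge (mem_filter.1 hk).2
end

section
/- Let κ be the multiplicative function defined on prime powers by κ(ℓ^e) = ℓ if e is odd and κ(ℓ^e) = 1 if e is even. Then for U ≥ 1, the tail sum Σ_{n > U} 1/(κ(n)·φ(n)) is O(1/√U). -/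
/-!
Write `n = s m²` with `s = κ(n)`. Since `φ(s m²) ≥ φ(s) φ(m²) = m φ(m) φ(s)`, the term of `n` is at
most `a(s) a(m)` with `a(k) = 1/(k φ(k))`, and `n ↦ (m, s)` is injective, so the sum is at most
`∑_{s m² > U} a(s) a(m)`. From `k = ∑_{d ∣ k} φ(d)` and `φ(d) φ(k/d) ≤ φ(k)` one gets
`k/φ(k) ≤ ∑_{d ∣ k} 1/φ(d)`; exchanging the sums over `d` and `k = d b` then gives
`∑_{k > N} a(k) = O(1/N)` and `∑_{k ≤ N} k/φ(k) = O(N)`. For `m ≤ √U` the sum over `s > U/m²`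
is `O(m²/U)`, which the second estimate sums to `O(1/√U)`; the pairs with `m > √U` contribute
`O(1/√U)` by the first one.
-/

/-- The multiplicative function `κ` with `κ(ℓ^e) = ℓ` for odd `e` and `1` for even `e`. -/
def kappa (n : ℕ) : ℕ :=
  ∏ p ∈ n.primeFactors, if Odd (n.factorization p) then p else 1

open Finset
open scoped ENNReal Nat

def kappaCofactorSqrt (n : ℕ) : ℕ := ∏ p ∈ n.primeFactors, p ^ (n.factorization p / 2)

lemma kappa_pos (n : ℕ) : 0 < kappa n :=
  prod_pos fun _ hp => by split_ifs <;> simp [(Nat.prime_of_mem_primeFactors hp).pos]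

lemma kappa_mul_kappaCofactorSqrt_sq {n : ℕ} (hn : n ≠ 0) :
    kappa n * kappaCofactorSqrt n ^ 2 = n := by
  conv_rhs => rw [← Nat.prod_factorization_pow_eq_self hn]
  rw [kappa, kappaCofactorSqrt, ← prod_pow, ← prod_mul_distrib, Finsupp.prod,
    Nat.support_factorization]
  refine prod_congr rfl fun p _ => ?_
  have hodd : (if Odd (n.factorization p) then p else 1) = p ^ (n.factorization p % 2) := by
    rcases Nat.even_or_odd (n.factorization p) with he | he
    · simp [Nat.not_odd_iff_even.mpr he, Nat.even_iff.mp he]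
    · simp [he, Nat.odd_iff.mp he]
  rw [hodd, ← pow_mul, ← pow_add, Nat.mod_add_div']

lemma injOn_kappaCofactorSqrt_kappa :
    Set.InjOn (fun n => (kappaCofactorSqrt n, kappa n)) {n | n ≠ 0} :=
  fun a ha b hb hab => by
    simp only [Prod.mk.injEq] at hab
    rw [← kappa_mul_kappaCofactorSqrt_sq ha, ← kappa_mul_kappaCofactorSqrt_sq hb, hab.2, hab.1]

lemma totient_mul_self (m : ℕ) : φ (m * m) = m * φ m := by
  rcases Nat.eq_zero_or_pos m with rfl | hm
  · simp
  have h := Nat.totient_gcd_mul_totient_mul m m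
  rw [Nat.gcd_self] at h
  exact Nat.eq_of_mul_eq_mul_left (Nat.totient_pos.mpr hm) (by rw [h]; ring)

lemma mul_totient_mul_mul_totient_le (s m : ℕ) :
    s * φ s * (m * φ m) ≤ s * φ (s * m ^ 2) := by
  calc s * φ s * (m * φ m) = s * (φ s * φ (m * m)) := by rw [totient_mul_self]; ring
    _ ≤ s * φ (s * m ^ 2) := by
      rw [sq]; exact Nat.mul_le_mul_left s (Nat.totient_super_multiplicative s (m * m))

lemma natCast_div_totient_le_sum_inv_totient (k : ℕ) :
    (k : ℝ≥0∞) / φ k ≤ ∑ d ∈ k.divisors, (φ d : ℝ≥0∞)⁻¹ := by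
  rcases eq_or_ne k 0 with rfl | hk
  · simp
  rw [ENNReal.div_le_iff (by simpa using hk) (ENNReal.natCast_ne_top _)]
  conv_lhs => rw [← Nat.sum_totient k, Nat.cast_sum]
  rw [← Nat.sum_div_divisors k, sum_mul]
  refine sum_le_sum fun d hd => ?_
  have hdk := Nat.dvd_of_mem_divisors hd
  have hφ : (φ d : ℝ≥0∞) ≠ 0 := by simpa using (Nat.pos_of_mem_divisors hd).ne'
  rw [← ENNReal.div_eq_inv_mul, ENNReal.le_div_iff_mul_le (Or.inl hφ) (Or.inl (by simp))]
  exact_mod_cast (Nat.div_mul_cancel hdk) ▸ Nat.totient_super_multiplicative (k / d) d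

lemma tsum_sum_divisorsAntidiagonal_le (G : ℕ × ℕ → ℝ≥0∞) :
    ∑' n : ℕ, ∑ x ∈ n.divisorsAntidiagonal, G x ≤ ∑' x, G x := by
  classical
  calc ∑' n : ℕ, ∑ x ∈ n.divisorsAntidiagonal, G x
      = ∑' n : ℕ, ∑' x, if x ∈ n.divisorsAntidiagonal then G x else 0 := by
        refine tsum_congr fun n => ?_
        rw [tsum_eq_sum (s := n.divisorsAntidiagonal) fun x hx => if_neg hx, sum_ite_mem,
          inter_self]
    _ = ∑' x, ∑' n : ℕ, if x ∈ n.divisorsAntidiagonal then G x else 0 := ENNReal.tsum_comm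
    _ ≤ ∑' x, G x := ENNReal.tsum_le_tsum fun x => by
        rw [tsum_eq_single (x.1 * x.2) fun n hn =>
          if_neg fun h => hn (Nat.mem_divisorsAntidiagonal.1 h).1.symm]
        split_ifs <;> simp

lemma tsum_div_totient_mul_le (w : ℕ → ℝ≥0∞) :
    ∑' k : ℕ, (k : ℝ≥0∞) / φ k * w k ≤ ∑' d, (φ d : ℝ≥0∞)⁻¹ * ∑' b, w (d * b) := by
  calc ∑' k : ℕ, (k : ℝ≥0∞) / φ k * w k
      ≤ ∑' k : ℕ, ∑ x ∈ k.divisorsAntidiagonal, (φ x.1 : ℝ≥0∞)⁻¹ * w (x.1 * x.2) := by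
        refine ENNReal.tsum_le_tsum fun k => ?_
        rw [Nat.sum_divisorsAntidiagonal (fun d b => (φ d : ℝ≥0∞)⁻¹ * w (d * b)),
          sum_congr rfl fun d hd => by rw [Nat.mul_div_cancel' (Nat.dvd_of_mem_divisors hd)],
          ← sum_mul]
        gcongr
        exact natCast_div_totient_le_sum_inv_totient k
    _ ≤ ∑' x : ℕ × ℕ, (φ x.1 : ℝ≥0∞)⁻¹ * w (x.1 * x.2) := tsum_sum_divisorsAntidiagonal_le _
    _ = _ := by rw [ENNReal.tsum_prod']; simp only [ENNReal.tsum_mul_left]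

lemma tsum_inv_sq_gt_le (q : ℕ) :
    ∑' b : ℕ, (if q < b then ((b : ℝ≥0∞) ^ 2)⁻¹ else 0) ≤ 2 / (q + 1) := by
  rw [ENNReal.tsum_eq_iSup_nat]
  refine iSup_le fun n => ?_
  rw [← sum_filter]
  calc ∑ b ∈ range n with q < b, ((b : ℝ≥0∞) ^ 2)⁻¹
      ≤ ∑ b ∈ Ioo q n, ((b : ℝ≥0∞) ^ 2)⁻¹ :=
        sum_le_sum_of_subset fun b hb => by simp only [mem_filter, mem_range] at hb; simp [hb]
    _ = ENNReal.ofReal (∑ b ∈ Ioo q n, ((b : ℝ) ^ 2)⁻¹) := by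
        rw [ENNReal.ofReal_sum_of_nonneg fun _ _ => by positivity]
        refine sum_congr rfl fun b hb => ?_
        have hb : (0 : ℝ) < b := Nat.cast_pos.2 (Nat.zero_lt_of_lt (mem_Ioo.1 hb).1)
        rw [ENNReal.ofReal_inv_of_pos (by positivity), ENNReal.ofReal_pow hb.le,
          ENNReal.ofReal_natCast]
    _ ≤ ENNReal.ofReal (2 / (q + 1)) := ENNReal.ofReal_le_ofReal (sum_Ioo_inv_sq_le q n)
    _ = 2 / (q + 1) := by
        rw [ENNReal.ofReal_div_of_pos (by positivity)]
        norm_cast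

noncomputable def invMulTotientTail (N : ℕ) : ℝ≥0∞ :=
  ∑' k : ℕ, if N < k then ((k : ℝ≥0∞) * φ k)⁻¹ else 0

lemma invMulTotientTail_antitone : Antitone invMulTotientTail := fun M N hMN =>
  ENNReal.tsum_le_tsum fun k => by
    split_ifs with hN hM
    · exact le_rfl
    · exact absurd (hMN.trans_lt hN) hM
    · exact zero_le
    · exact le_rfl

lemma inv_mul_totient_eq {k : ℕ} (hk : k ≠ 0) :
    ((k : ℝ≥0∞) * φ k)⁻¹ = k / φ k * ((k : ℝ≥0∞) ^ 2)⁻¹ := by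
  have hk' : (k : ℝ≥0∞) ≠ 0 := by simpa using hk
  rw [ENNReal.mul_inv (Or.inr (by simp)) (Or.inl (by simp)), div_eq_mul_inv, ENNReal.inv_pow,
    pow_two, ← mul_assoc, mul_comm (k : ℝ≥0∞), mul_assoc, mul_assoc, ← mul_assoc (k : ℝ≥0∞),
    ENNReal.mul_inv_cancel hk' (by simp), one_mul, mul_comm]

lemma tsum_inv_sq_mul_gt_le (N : ℕ) {d : ℕ} (hd : d ≠ 0) :
    ∑' b : ℕ, (if N < d * b then (((d * b : ℕ) : ℝ≥0∞) ^ 2)⁻¹ else 0)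
      ≤ ((d : ℝ≥0∞) ^ 2)⁻¹ * (2 / ((N / d : ℕ) + 1)) := by
  calc ∑' b : ℕ, (if N < d * b then (((d * b : ℕ) : ℝ≥0∞) ^ 2)⁻¹ else 0)
      = ∑' b : ℕ, ((d : ℝ≥0∞) ^ 2)⁻¹ * if N / d < b then ((b : ℝ≥0∞) ^ 2)⁻¹ else 0 := by
        refine tsum_congr fun b => ?_
        have hiff : N < d * b ↔ N / d < b := by
          rw [Nat.div_lt_iff_lt_mul (Nat.pos_of_ne_zero hd), mul_comm]
        simp only [hiff]
        split_ifs
        · rw [Nat.cast_mul, mul_pow, ENNReal.mul_inv (by simp) (by simp)]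
        · rw [mul_zero]
    _ ≤ ((d : ℝ≥0∞) ^ 2)⁻¹ * (2 / ((N / d : ℕ) + 1)) := by
        rw [ENNReal.tsum_mul_left]
        gcongr
        exact tsum_inv_sq_gt_le _

lemma invMulTotientTail_le_tsum (N : ℕ) :
    invMulTotientTail N ≤ ∑' d : ℕ, if d = 0 then 0
      else (φ d : ℝ≥0∞)⁻¹ * (((d : ℝ≥0∞) ^ 2)⁻¹ * (2 / ((N / d : ℕ) + 1))) := by
  let w : ℕ → ℝ≥0∞ := fun k => if N < k then ((k : ℝ≥0∞) ^ 2)⁻¹ else 0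
  calc invMulTotientTail N = ∑' k : ℕ, (k : ℝ≥0∞) / φ k * w k := by
        refine tsum_congr fun k => ?_
        rcases eq_or_ne k 0 with rfl | hk
        · simp [w]
        · simp only [w, mul_ite, mul_zero, inv_mul_totient_eq hk]
    _ ≤ ∑' d, (φ d : ℝ≥0∞)⁻¹ * ∑' b, w (d * b) := tsum_div_totient_mul_le w
    _ ≤ _ := ENNReal.tsum_le_tsum fun d => by
        rcases eq_or_ne d 0 with rfl | hd
        · simp [w]
        · rw [if_neg hd]
          gcongr
          exact tsum_inv_sq_mul_gt_le N hd

lemma invMulTotientTail_zero_le : invMulTotientTail 0 ≤ 4 := by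
  calc invMulTotientTail 0 ≤ ∑' d : ℕ, if d = 0 then 0
        else (φ d : ℝ≥0∞)⁻¹ * (((d : ℝ≥0∞) ^ 2)⁻¹ * (2 / ((0 / d : ℕ) + 1))) :=
        invMulTotientTail_le_tsum 0
    _ ≤ ∑' d : ℕ, 2 * if 0 < d then ((d : ℝ≥0∞) ^ 2)⁻¹ else 0 := ENNReal.tsum_le_tsum fun d => by
        rcases eq_or_ne d 0 with rfl | hd
        · simp
        have hφ : (φ d : ℝ≥0∞)⁻¹ ≤ 1 :=
          ENNReal.inv_le_one.2 (by exact_mod_cast Nat.totient_pos.2 (Nat.pos_of_ne_zero hd))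
        rw [if_neg hd, if_pos (Nat.pos_of_ne_zero hd), Nat.zero_div, Nat.cast_zero, zero_add,
          div_one, mul_comm 2]
        exact mul_le_of_le_one_left zero_le hφ
    _ ≤ 2 * (2 / (0 + 1)) := by
        rw [ENNReal.tsum_mul_left]
        gcongr
        exact_mod_cast tsum_inv_sq_gt_le 0
    _ = 4 := by norm_num

lemma invMulTotientTail_le_mul (N : ℕ) :
    invMulTotientTail N ≤ invMulTotientTail 0 * (2 / (N + 1)) := by
  calc invMulTotientTail N ≤ ∑' d : ℕ, if d = 0 then 0
        else (φ d : ℝ≥0∞)⁻¹ * (((d : ℝ≥0∞) ^ 2)⁻¹ * (2 / ((N / d : ℕ) + 1))) :=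
        invMulTotientTail_le_tsum N
    _ ≤ ∑' d : ℕ, (if 0 < d then ((d : ℝ≥0∞) * φ d)⁻¹ else 0) * (2 / (N + 1)) :=
        ENNReal.tsum_le_tsum fun d => by
          rcases eq_or_ne d 0 with rfl | hd
          · simp
          rw [if_neg hd, if_pos (Nat.pos_of_ne_zero hd), ENNReal.mul_inv (by simp) (by simp),
            div_eq_mul_inv, div_eq_mul_inv, ENNReal.inv_pow, pow_two]
          set q : ℝ≥0∞ := ((N / d : ℕ) : ℝ≥0∞) + 1
          have hsucc : (d : ℝ≥0∞)⁻¹ * q⁻¹ ≤ ((N : ℝ≥0∞) + 1)⁻¹ := by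
            rw [← ENNReal.mul_inv (by simp [q]) (by simp), ENNReal.inv_le_inv]
            simp only [q]
            exact_mod_cast (Nat.lt_mul_div_succ N (Nat.pos_of_ne_zero hd))
          calc (φ d : ℝ≥0∞)⁻¹ * ((d : ℝ≥0∞)⁻¹ * (d : ℝ≥0∞)⁻¹ * (2 * q⁻¹))
              = (d : ℝ≥0∞)⁻¹ * (φ d : ℝ≥0∞)⁻¹ * 2 * ((d : ℝ≥0∞)⁻¹ * q⁻¹) := by ring
            _ ≤ (d : ℝ≥0∞)⁻¹ * (φ d : ℝ≥0∞)⁻¹ * 2 * ((N : ℝ≥0∞) + 1)⁻¹ := by gcongr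
            _ = _ := by ring
    _ = invMulTotientTail 0 * (2 / (N + 1)) := by
        rw [ENNReal.tsum_mul_right]; rfl

lemma invMulTotientTail_le (N : ℕ) : invMulTotientTail N ≤ 8 / (N + 1) :=
  calc invMulTotientTail N ≤ invMulTotientTail 0 * (2 / (N + 1)) := invMulTotientTail_le_mul N
    _ ≤ 4 * (2 / (N + 1)) := by gcongr; exact invMulTotientTail_zero_le
    _ = 8 / (N + 1) := by rw [← mul_div_assoc]; norm_num

lemma tsum_ite_mul_mem_Ioc (N : ℕ) {d : ℕ} (hd : d ≠ 0) :
    ∑' b : ℕ, (if d * b ∈ Ioc 0 N then 1 else 0 : ℝ≥0∞) = (N / d : ℕ) := by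
  have hiff : ∀ b, d * b ∈ Ioc 0 N ↔ b ∈ Ioc 0 (N / d) := fun b => by
    simp only [mem_Ioc, Nat.le_div_iff_mul_le (Nat.pos_of_ne_zero hd), mul_comm b d,
      Nat.mul_pos_iff_of_pos_left (Nat.pos_of_ne_zero hd)]
  simp only [hiff]
  rw [tsum_eq_sum (s := Ioc 0 (N / d)) fun b hb => if_neg hb, sum_boole, filter_mem_eq_inter,
    inter_self, Nat.card_Ioc, Nat.sub_zero]

lemma sum_Ioc_div_totient_le (N : ℕ) : ∑ k ∈ Ioc 0 N, (k : ℝ≥0∞) / φ k ≤ 4 * N := by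
  calc ∑ k ∈ Ioc 0 N, (k : ℝ≥0∞) / φ k
      = ∑' k : ℕ, (k : ℝ≥0∞) / φ k * if k ∈ Ioc 0 N then 1 else 0 := by
        rw [tsum_eq_sum (s := Ioc 0 N) fun k hk => by rw [if_neg hk, mul_zero]]
        exact sum_congr rfl fun k hk => by rw [if_pos hk, mul_one]
    _ ≤ ∑' d, (φ d : ℝ≥0∞)⁻¹ * ∑' b, if d * b ∈ Ioc 0 N then 1 else 0 :=
        tsum_div_totient_mul_le _
    _ ≤ ∑' d : ℕ, (if 0 < d then ((d : ℝ≥0∞) * φ d)⁻¹ else 0) * N :=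
        ENNReal.tsum_le_tsum fun d => by
          rcases eq_or_ne d 0 with rfl | hd
          · simp
          rw [tsum_ite_mul_mem_Ioc N hd, if_pos (Nat.pos_of_ne_zero hd),
            ENNReal.mul_inv (by simp) (by simp), mul_comm (d : ℝ≥0∞)⁻¹, mul_assoc]
          gcongr
          rw [← ENNReal.div_eq_inv_mul, ENNReal.le_div_iff_mul_le (by simp [hd]) (by simp)]
          exact_mod_cast Nat.div_mul_le_self N d
    _ = invMulTotientTail 0 * N := ENNReal.tsum_mul_right
    _ ≤ 4 * N := by gcongr; exact invMulTotientTail_zero_le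

lemma tsum_inv_kappa_mul_totient_le_tsum_invMulTotientTail (U : ℕ) :
    ∑' n : ℕ, (if U < n then ((kappa n : ℝ≥0∞) * φ n)⁻¹ else 0)
      ≤ ∑' m : ℕ, if m = 0 then 0 else ((m : ℝ≥0∞) * φ m)⁻¹ * invMulTotientTail (U / m ^ 2) := by
  let F : ℕ → ℝ≥0∞ := fun n => if U < n then ((kappa n : ℝ≥0∞) * φ n)⁻¹ else 0
  let G : ℕ × ℕ → ℝ≥0∞ := fun p =>
    if U < p.2 * p.1 ^ 2 then ((p.1 : ℝ≥0∞) * φ p.1)⁻¹ * ((p.2 : ℝ≥0∞) * φ p.2)⁻¹ else 0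
  have hFG : ∀ n : {n : ℕ // n ≠ 0}, F n ≤ G (kappaCofactorSqrt n, kappa n) := fun ⟨n, hn⟩ => by
    have hdecomp := kappa_mul_kappaCofactorSqrt_sq hn
    simp only [F, G, hdecomp]
    split_ifs
    · rw [← ENNReal.mul_inv (Or.inr (ENNReal.mul_ne_top (by simp) (by simp)))
        (Or.inl (ENNReal.mul_ne_top (by simp) (by simp))), ENNReal.inv_le_inv]
      have := mul_totient_mul_mul_totient_le (kappa n) (kappaCofactorSqrt n)
      rw [hdecomp] at this
      exact_mod_cast (mul_comm _ _).trans_le this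
    · exact le_rfl
  calc ∑' n, F n = ∑' n : {n : ℕ // n ≠ 0}, F n :=
        (tsum_subtype_eq_of_support_subset fun n hn => by
          rintro rfl; exact hn (by simp [F])).symm
    _ ≤ ∑' n : {n : ℕ // n ≠ 0}, G (kappaCofactorSqrt n, kappa n) := ENNReal.tsum_le_tsum hFG
    _ ≤ ∑' p, G p := ENNReal.tsum_comp_le_tsum_of_injective
        (injOn_kappaCofactorSqrt_kappa.injective) G
    _ = _ := by
        rw [ENNReal.tsum_prod']
        refine tsum_congr fun m => ?_
        rcases eq_or_ne m 0 with rfl | hm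
        · simp [G]
        rw [if_neg hm, invMulTotientTail, ← ENNReal.tsum_mul_left]
        refine tsum_congr fun s => ?_
        have hiff : U < s * m ^ 2 ↔ U / m ^ 2 < s :=
          (Nat.div_lt_iff_lt_mul (by positivity)).symm
        simp only [G, hiff, mul_ite, mul_zero]

lemma tsum_inv_kappa_mul_totient_le (U : ℕ) :
    ∑' n : ℕ, (if U < n then ((kappa n : ℝ≥0∞) * φ n)⁻¹ else 0)
      ≤ 32 * ((Nat.sqrt U : ℝ≥0∞) / (U + 1) + 1 / (Nat.sqrt U + 1)) := by
  set r := Nat.sqrt U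
  have hsmall : ∀ m ∈ Ioc 0 r, ((m : ℝ≥0∞) * φ m)⁻¹ * invMulTotientTail (U / m ^ 2)
      ≤ 8 / (U + 1) * (m / φ m) := fun m hm => by
    have hm0 : m ≠ 0 := (mem_Ioc.1 hm).1.ne'
    have hsucc : ((m : ℝ≥0∞) ^ 2)⁻¹ * (((U / m ^ 2 : ℕ) : ℝ≥0∞) + 1)⁻¹ ≤ ((U : ℝ≥0∞) + 1)⁻¹ := by
      rw [← ENNReal.mul_inv (by simp) (by simp), ENNReal.inv_le_inv]
      exact_mod_cast Nat.lt_mul_div_succ U (by positivity : 0 < m ^ 2)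
    calc ((m : ℝ≥0∞) * φ m)⁻¹ * invMulTotientTail (U / m ^ 2)
        ≤ m / φ m * ((m : ℝ≥0∞) ^ 2)⁻¹ * (8 / ((U / m ^ 2 : ℕ) + 1)) := by
          rw [inv_mul_totient_eq hm0]; gcongr; exact invMulTotientTail_le _
      _ = 8 * (m / φ m) * (((m : ℝ≥0∞) ^ 2)⁻¹ * (((U / m ^ 2 : ℕ) : ℝ≥0∞) + 1)⁻¹) := by
          simp only [div_eq_mul_inv]; ring
      _ ≤ 8 * (m / φ m) * ((U : ℝ≥0∞) + 1)⁻¹ := by gcongr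
      _ = 8 / (U + 1) * (m / φ m) := by simp only [div_eq_mul_inv]; ring
  calc ∑' n : ℕ, (if U < n then ((kappa n : ℝ≥0∞) * φ n)⁻¹ else 0)
      ≤ ∑' m : ℕ, if m = 0 then 0 else ((m : ℝ≥0∞) * φ m)⁻¹ * invMulTotientTail (U / m ^ 2) :=
        tsum_inv_kappa_mul_totient_le_tsum_invMulTotientTail U
    _ ≤ ∑' m : ℕ, ((if m ∈ Ioc 0 r then 8 / ((U : ℝ≥0∞) + 1) * (m / φ m) else 0)
          + 4 * if r < m then ((m : ℝ≥0∞) * φ m)⁻¹ else 0) := ENNReal.tsum_le_tsum fun m => by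
        rcases eq_or_ne m 0 with rfl | hm0
        · simp
        rw [if_neg hm0]
        by_cases hmr : m ≤ r
        · have hm : m ∈ Ioc 0 r := mem_Ioc.2 ⟨Nat.pos_of_ne_zero hm0, hmr⟩
          rw [if_pos hm]
          exact (hsmall m hm).trans le_self_add
        · rw [if_neg fun h => hmr (mem_Ioc.1 h).2, if_pos (not_le.1 hmr), zero_add, mul_comm 4]
          gcongr
          exact (invMulTotientTail_antitone (Nat.zero_le _)).trans invMulTotientTail_zero_le
    _ = 8 / (U + 1) * ∑ m ∈ Ioc 0 r, (m : ℝ≥0∞) / φ m + 4 * invMulTotientTail r := by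
        rw [ENNReal.tsum_add, ENNReal.tsum_mul_left,
          tsum_eq_sum (s := Ioc 0 r) fun m hm => if_neg hm, sum_ite_mem, inter_self, mul_sum]
        rfl
    _ ≤ 8 / (U + 1) * (4 * r) + 4 * (8 / (r + 1)) := by
        gcongr
        · exact sum_Ioc_div_totient_le r
        · exact invMulTotientTail_le r
    _ = 32 * ((r : ℝ≥0∞) / (U + 1) + 1 / (r + 1)) := by
        simp only [div_eq_mul_inv]; ring

lemma natSqrt_div_add_one_div_le {U : ℕ} (hU : 1 ≤ U) :
    (Nat.sqrt U : ℝ) / (U + 1) + 1 / (Nat.sqrt U + 1) ≤ 2 / √U := by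
  have hU' : (0 : ℝ) < U := by exact_mod_cast hU
  have hs : 0 < √(U : ℝ) := Real.sqrt_pos.2 hU'
  have hle : (Nat.sqrt U : ℝ) ≤ √U := Real.le_sqrt_of_sq_le (by exact_mod_cast Nat.sqrt_le' U)
  have hlt : √(U : ℝ) < Nat.sqrt U + 1 := by
    rw [Real.sqrt_lt' (by positivity)]; exact_mod_cast Nat.lt_succ_sqrt' U
  have hsq : √(U : ℝ) ^ 2 = U := Real.sq_sqrt hU'.le
  have h1 : (Nat.sqrt U : ℝ) / (U + 1) ≤ 1 / √U := by
    rw [div_le_div_iff₀ (by positivity) hs]; nlinarith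
  have h2 : 1 / ((Nat.sqrt U : ℝ) + 1) ≤ 1 / √U := one_div_le_one_div_of_le hs hlt.le
  linarith [show 2 / √(U : ℝ) = 1 / √U + 1 / √U by ring]

/-- `Σ_{n > U} 1/(κ(n)·φ(n)) = O(1/√U)` for `U ≥ 1`. -/
theorem stmt4 :
    ∃ C : ℝ, ∀ U : ℕ, 1 ≤ U →
      (∑' n : ℕ, if n ≤ U then (0 : ℝ)
        else 1 / ((kappa n : ℝ) * (Nat.totient n)))
        ≤ C / Real.sqrt U := by
  refine ⟨64, fun U hU => ?_⟩
  let g : ℕ → ℝ≥0∞ := fun n => if U < n then ((kappa n : ℝ≥0∞) * φ n)⁻¹ else 0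
  have hg : ∀ n, g n ≠ ⊤ := fun n => by
    by_cases hn : U < n
    · simp [g, if_pos hn, (kappa_pos n).ne', Nat.totient_eq_zero, (Nat.zero_lt_of_lt hn).ne']
    · simp [g, if_neg hn]
  calc (∑' n : ℕ, if n ≤ U then (0 : ℝ) else 1 / ((kappa n : ℝ) * (Nat.totient n)))
      = (∑' n, g n).toReal := by
        rw [ENNReal.tsum_toReal_eq hg]
        refine tsum_congr fun n => ?_
        by_cases hn : n ≤ U
        · simp [g, hn, not_lt.2 hn]
        · simp [g, hn, not_le.1 hn]
    _ ≤ (32 * ((Nat.sqrt U : ℝ≥0∞) / (U + 1) + 1 / (Nat.sqrt U + 1))).toReal :=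
        ENNReal.toReal_mono (by finiteness) (tsum_inv_kappa_mul_totient_le U)
    _ = 32 * ((Nat.sqrt U : ℝ) / (U + 1) + 1 / (Nat.sqrt U + 1)) := by
        rw [ENNReal.toReal_mul, ENNReal.toReal_add (by finiteness) (by finiteness),
          ENNReal.toReal_div, ENNReal.toReal_div]
        simp [ENNReal.toReal_add]
    _ ≤ 32 * (2 / √U) := by gcongr; exact natSqrt_div_add_one_div_le hU
    _ = 64 / √U := by ring
end

section
/- Fix an integer N ≥ 1 and let κ_N be the multiplicative function with κ_N(ℓ^e) = ℓ if ℓ ∤ N and e is odd, and κ_N(ℓ^e) = 1 otherwise. Then Σ_{n > U} 1/(κ_N(n)·φ(n)) ≪_N 1/√U for U ≥ 1. -/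
/-!
Write `n = s m²` with `s` the product of the primes dividing `n` to an odd power. Then
`s ≤ N κ_N(n)` and `φ(n) ≥ φ(s) m φ(m)`, so the tail is at most `N` times the sum of
`1/(s φ(s)) · 1/(m φ(m))` over the pairs with `m > √(U/s)`. The inequality
`k/φ(k) ≤ ∑_{d ∣ k} 1/φ(d)` compares `∑ 1/(k^γ φ(k))` with a product of two convergent series
when `γ > 0`, and gives `∑_{m > x} 1/(m φ(m)) ≪ 1/x`. Summing that tail over `s` leaves
`U^{-1/2} ∑_s 1/(√s φ(s))`.
-/

def kappaN (N n : ℕ) : ℕ :=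
  ∏ p ∈ n.primeFactors, if ¬ p ∣ N ∧ Odd (n.factorization p) then p else 1

open Finset
open scoped Nat

section DivisorsAntidiagonal

variable {f : ℕ → ℝ} {g : ℕ × ℕ → ℝ}

theorem sum_le_tsum_of_le_sum_divisorsAntidiagonal (hg : 0 ≤ g) (hgs : Summable g)
    (h : ∀ k, f k ≤ ∑ p ∈ k.divisorsAntidiagonal, g p) (A : Finset ℕ) :
    ∑ k ∈ A, f k ≤ ∑' p, g p := by
  have hdisj : (A : Set ℕ).PairwiseDisjoint Nat.divisorsAntidiagonal := by
    intro k _ l _ hkl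
    refine Finset.disjoint_left.2 fun p hk hl => hkl ?_
    rw [← (Nat.mem_divisorsAntidiagonal.1 hk).1, (Nat.mem_divisorsAntidiagonal.1 hl).1]
  calc ∑ k ∈ A, f k ≤ ∑ k ∈ A, ∑ p ∈ k.divisorsAntidiagonal, g p := sum_le_sum fun k _ => h k
    _ = ∑ p ∈ A.biUnion Nat.divisorsAntidiagonal, g p := (sum_biUnion hdisj).symm
    _ ≤ ∑' p, g p := hgs.sum_le_tsum _ fun p _ => hg p

theorem summable_of_le_sum_divisorsAntidiagonal (hf : 0 ≤ f) (hg : 0 ≤ g) (hgs : Summable g)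
    (h : ∀ k, f k ≤ ∑ p ∈ k.divisorsAntidiagonal, g p) : Summable f :=
  summable_of_sum_le hf (sum_le_tsum_of_le_sum_divisorsAntidiagonal hg hgs h)

theorem tsum_le_of_le_sum_divisorsAntidiagonal (hf : 0 ≤ f) (hg : 0 ≤ g) (hgs : Summable g)
    (h : ∀ k, f k ≤ ∑ p ∈ k.divisorsAntidiagonal, g p) : ∑' k, f k ≤ ∑' p, g p :=
  Real.tsum_le_of_sum_le hf (sum_le_tsum_of_le_sum_divisorsAntidiagonal hg hgs h)

end DivisorsAntidiagonal

theorem tsum_le_tsum_of_injOn {ι κ : Type*} {f : ι → ℝ} {g : κ → ℝ} (e : ι → κ)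
    (he : Set.InjOn e (Function.support f)) (hf : 0 ≤ f) (hg : 0 ≤ g) (hgs : Summable g)
    (hfg : ∀ i, f i ≤ g (e i)) : ∑' i, f i ≤ ∑' k, g k := by
  classical
  refine Real.tsum_le_of_sum_le hf fun A => ?_
  have he' : Set.InjOn e (A.filter (f · ≠ 0) : Set ι) :=
    he.mono fun i hi => (mem_filter.1 hi).2
  calc ∑ i ∈ A, f i = ∑ i ∈ A.filter (f · ≠ 0), f i := (sum_filter_ne_zero A).symm
    _ ≤ ∑ i ∈ A.filter (f · ≠ 0), g (e i) := sum_le_sum fun i _ => hfg i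
    _ = ∑ k ∈ (A.filter (f · ≠ 0)).image e, g k := (sum_image he').symm
    _ ≤ ∑' k, g k := hgs.sum_le_tsum _ fun k _ => hg k

theorem tsum_one_div_sq_tail_le {y : ℝ} (hy : 0 < y) :
    ∑' j : ℕ, (if y < j then 1 / (j : ℝ) ^ 2 else 0) ≤ 2 / y := by
  refine Real.tsum_le_of_sum_le (fun j => by positivity) fun A => ?_
  obtain ⟨n, hn⟩ := A.exists_nat_subset_range
  calc ∑ j ∈ A, (if y < j then 1 / (j : ℝ) ^ 2 else 0)
      = ∑ j ∈ A.filter (fun j : ℕ => y < j), ((j : ℝ) ^ 2)⁻¹ := by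
        rw [sum_filter]; simp only [one_div]
    _ ≤ ∑ j ∈ Ioo ⌊y⌋₊ n, ((j : ℝ) ^ 2)⁻¹ := by
      refine sum_le_sum_of_subset_of_nonneg (fun j hj => ?_) fun _ _ _ => by positivity
      obtain ⟨hjA, hyj⟩ := mem_filter.1 hj
      exact mem_Ioo.2 ⟨(Nat.floor_lt hy.le).2 hyj, mem_range.1 (hn hjA)⟩
    _ ≤ 2 / (⌊y⌋₊ + 1) := sum_Ioo_inv_sq_le _ _
    _ ≤ 2 / y := by gcongr; exact (Nat.lt_floor_add_one y).le

namespace Nat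

theorem totient_sq (m : ℕ) : φ (m ^ 2) = m * φ m := by
  rcases m.eq_zero_or_pos with rfl | hm
  · simp
  have h := totient_gcd_mul_totient_mul m m
  rw [gcd_self, ← sq] at h
  exact Nat.eq_of_mul_eq_mul_left (totient_pos.2 hm) (h.trans (by ring))

theorem totient_mul_mul_totient_le (s m : ℕ) : φ s * (m * φ m) ≤ φ (s * m ^ 2) :=
  totient_sq m ▸ totient_super_multiplicative s (m ^ 2)

theorem cast_div_totient_le_sum_inv_totient (k : ℕ) :
    (k : ℝ) / φ k ≤ ∑ p ∈ k.divisorsAntidiagonal, (φ p.1 : ℝ)⁻¹ := by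
  rcases k.eq_zero_or_pos with rfl | hk
  · simp
  have hφk : (0 : ℝ) < φ k := by exact_mod_cast totient_pos.2 hk
  have hk_sum : (k : ℝ) = ∑ p ∈ k.divisorsAntidiagonal, (φ p.2 : ℝ) := by
    rw [Nat.sum_divisorsAntidiagonal' fun _ b => (φ b : ℝ)]
    exact_mod_cast (sum_totient k).symm
  rw [hk_sum, sum_div]
  refine sum_le_sum fun p hp => ?_
  obtain ⟨hpk, -⟩ := mem_divisorsAntidiagonal.1 hp
  have hp1 : (0 : ℝ) < φ p.1 := by
    exact_mod_cast totient_pos.2 (Nat.pos_of_mul_pos_right (hpk ▸ hk))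
  rw [div_le_iff₀ hφk, inv_mul_eq_div, le_div_iff₀ hp1]
  exact_mod_cast hpk ▸ mul_comm (φ p.1) (φ p.2) ▸ totient_super_multiplicative p.1 p.2

end Nat

theorem one_div_rpow_mul_totient_le_sum (γ : ℝ) (k : ℕ) :
    1 / ((k : ℝ) ^ γ * φ k) ≤ ∑ p ∈ k.divisorsAntidiagonal,
      1 / ((p.1 : ℝ) ^ (γ + 1) * φ p.1) * (1 / (p.2 : ℝ) ^ (γ + 1)) := by
  rcases eq_or_ne k 0 with rfl | hk
  · simp
  have hk' : (0 : ℝ) < k := by positivity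
  have hterm : ∀ p ∈ k.divisorsAntidiagonal,
      1 / ((p.1 : ℝ) ^ (γ + 1) * φ p.1) * (1 / (p.2 : ℝ) ^ (γ + 1))
        = (φ p.1 : ℝ)⁻¹ / (k : ℝ) ^ (γ + 1) := by
    intro p hp
    have hpk : (p.1 : ℝ) * p.2 = k := by exact_mod_cast (Nat.mem_divisorsAntidiagonal.1 hp).1
    rw [← hpk, Real.mul_rpow (by positivity) (by positivity)]
    ring
  rw [sum_congr rfl hterm, ← sum_div, Real.rpow_add_one hk'.ne']
  calc 1 / ((k : ℝ) ^ γ * φ k) = (k / φ k) / ((k : ℝ) ^ γ * k) := by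
        field_simp
    _ ≤ _ := by gcongr; exact Nat.cast_div_totient_le_sum_inv_totient k

theorem summable_one_div_rpow_mul_totient {γ : ℝ} (hγ : 0 < γ) :
    Summable fun k : ℕ => 1 / ((k : ℝ) ^ γ * φ k) := by
  have hζ : Summable fun d : ℕ => 1 / (d : ℝ) ^ (γ + 1) :=
    Real.summable_one_div_nat_rpow.2 (by linarith)
  have hle : ∀ d : ℕ, 1 / ((d : ℝ) ^ (γ + 1) * φ d) ≤ 1 / (d : ℝ) ^ (γ + 1) := fun d => by
    rw [one_div, mul_inv, ← one_div]
    exact mul_le_of_le_one_right (by positivity) (Nat.cast_inv_le_one _)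
  have hg := (hζ.of_nonneg_of_le (fun _ => by positivity) hle).mul_of_nonneg hζ
    (fun _ => by positivity) fun _ => by positivity
  exact summable_of_le_sum_divisorsAntidiagonal (fun _ => by positivity)
    (fun _ => by positivity) hg (one_div_rpow_mul_totient_le_sum γ)

theorem summable_one_div_mul_totient : Summable fun k : ℕ => 1 / ((k : ℝ) * φ k) := by
  simpa using summable_one_div_rpow_mul_totient one_pos

theorem ite_one_div_mul_totient_le_sum (x : ℝ) (k : ℕ) :
    (if x < k then 1 / ((k : ℝ) * φ k) else 0) ≤ ∑ p ∈ k.divisorsAntidiagonal,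
      1 / ((p.1 : ℝ) ^ 2 * φ p.1) * (if x / p.1 < p.2 then 1 / (p.2 : ℝ) ^ 2 else 0) := by
  split_ifs with hxk
  · have h := one_div_rpow_mul_totient_le_sum 1 k
    simp only [Real.rpow_one, one_add_one_eq_two, Real.rpow_two] at h
    refine h.trans_eq (sum_congr rfl fun p hp => ?_)
    obtain ⟨hpk, hk⟩ := Nat.mem_divisorsAntidiagonal.1 hp
    have hp1 : (0 : ℝ) < p.1 := by
      exact_mod_cast Nat.pos_of_ne_zero (left_ne_zero_of_mul (hpk ▸ hk))
    have hcond : x / p.1 < p.2 := by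
      rw [div_lt_iff₀ hp1, mul_comm]
      exact_mod_cast hpk ▸ hxk
    rw [if_pos hcond]
  · exact sum_nonneg fun p _ => by split_ifs <;> positivity

theorem tsum_one_div_mul_totient_tail_le {x : ℝ} (hx : 0 < x) :
    ∑' k : ℕ, (if x < k then 1 / ((k : ℝ) * φ k) else 0)
      ≤ 2 / x * ∑' k : ℕ, 1 / ((k : ℝ) * φ k) := by
  set g : ℕ × ℕ → ℝ := fun p =>
    1 / ((p.1 : ℝ) ^ 2 * φ p.1) * (if x / p.1 < p.2 then 1 / (p.2 : ℝ) ^ 2 else 0) with hg_def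
  have hg : 0 ≤ g := fun p => by
    simp only [hg_def, Pi.zero_apply]; split_ifs <;> positivity
  have hζ : Summable fun d : ℕ => 1 / (d : ℝ) ^ 2 := Real.summable_one_div_nat_pow.2 one_lt_two
  have hgs : Summable g := by
    refine (hζ.mul_of_nonneg hζ (fun _ => by positivity) fun _ => by positivity).of_nonneg_of_le
      hg fun p => mul_le_mul ?_ ?_ (by split_ifs <;> positivity) (by positivity)
    · rw [one_div, mul_inv, ← one_div]
      exact mul_le_of_le_one_right (by positivity) (Nat.cast_inv_le_one _)
    · split_ifs
      exacts [le_rfl, by positivity]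
  have hrow : ∀ d : ℕ, ∑' j, g (d, j) ≤ 2 / x * (1 / ((d : ℝ) * φ d)) := by
    intro d
    rcases eq_or_ne d 0 with rfl | hd
    · simp [hg_def]
    have hd' : (0 : ℝ) < d := by positivity
    have hφ : (0 : ℝ) < φ d := by exact_mod_cast Nat.totient_pos.2 (Nat.pos_of_ne_zero hd)
    calc ∑' j, g (d, j) ≤ 1 / ((d : ℝ) ^ 2 * φ d) * (2 / (x / d)) := by
          simp only [hg_def]
          rw [tsum_mul_left]
          gcongr
          exact tsum_one_div_sq_tail_le (by positivity)
      _ = 2 / x * (1 / ((d : ℝ) * φ d)) := by field_simp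
  calc _ ≤ ∑' p, g p := tsum_le_of_le_sum_divisorsAntidiagonal
          (fun k => by split_ifs <;> positivity) hg hgs (ite_one_div_mul_totient_le_sum x)
    _ = ∑' d, ∑' j, g (d, j) := hgs.tsum_prod
    _ ≤ ∑' d : ℕ, 2 / x * (1 / ((d : ℝ) * φ d)) :=
        hgs.prod.tsum_le_tsum hrow (summable_one_div_mul_totient.mul_left _)
    _ = _ := tsum_mul_left

namespace Nat

def squarefreePart (n : ℕ) : ℕ :=
  ∏ p ∈ n.primeFactors, p ^ (n.factorization p % 2)

def squarePartSqrt (n : ℕ) : ℕ :=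
  ∏ p ∈ n.primeFactors, p ^ (n.factorization p / 2)

theorem squarefreePart_mul_squarePartSqrt_sq {n : ℕ} (hn : n ≠ 0) :
    n.squarefreePart * n.squarePartSqrt ^ 2 = n := by
  conv_rhs => rw [prod_primeFactors_pow_factorization hn]
  rw [squarefreePart, squarePartSqrt, ← prod_pow, ← prod_mul_distrib]
  refine prod_congr rfl fun p _ => ?_
  rw [← pow_mul, ← pow_add, mul_comm, Nat.mod_add_div]

theorem squarefreePart_le_mul_kappaN {N : ℕ} (hN : N ≠ 0) (n : ℕ) :
    n.squarefreePart ≤ N * kappaN N n := by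
  have hfactor : ∀ p ∈ n.primeFactors, p ^ (n.factorization p % 2)
      ≤ (if ¬ p ∣ N ∧ Odd (n.factorization p) then p else 1) * (if p ∣ N then p else 1) := by
    intro p hp
    have hp1 := (prime_of_mem_primeFactors hp).one_lt
    rcases Nat.mod_two_eq_zero_or_one (n.factorization p) with h | h <;>
      by_cases hpN : p ∣ N <;> simp [h, hpN, Nat.odd_iff]
    all_goals omega
  have hdvd : ∏ p ∈ n.primeFactors with p ∣ N, p ∣ N :=
    (prod_dvd_prod_of_subset _ _ _ fun p hp => by
      obtain ⟨hp, hpN⟩ := mem_filter.1 hp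
      exact mem_primeFactors.2 ⟨prime_of_mem_primeFactors hp, hpN, hN⟩).trans
      (prod_primeFactors_dvd N)
  calc n.squarefreePart
      ≤ ∏ p ∈ n.primeFactors,
          (if ¬ p ∣ N ∧ Odd (n.factorization p) then p else 1) * (if p ∣ N then p else 1) :=
        prod_le_prod' hfactor
    _ = kappaN N n * ∏ p ∈ n.primeFactors with p ∣ N, p := by
        rw [prod_mul_distrib, prod_filter, kappaN]
    _ ≤ kappaN N n * N := Nat.mul_le_mul_left _ (le_of_dvd (pos_of_ne_zero hN) hdvd)
    _ = N * kappaN N n := mul_comm _ _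

end Nat

theorem one_div_kappaN_mul_totient_le {N n : ℕ} (hN : N ≠ 0) (hn : n ≠ 0) :
    1 / ((kappaN N n : ℝ) * φ n)
      ≤ N * (1 / ((n.squarefreePart : ℝ) * φ n.squarefreePart)
        * (1 / ((n.squarePartSqrt : ℝ) * φ n.squarePartSqrt))) := by
  set s := n.squarefreePart
  set m := n.squarePartSqrt
  have hsm : s * m ^ 2 = n := Nat.squarefreePart_mul_squarePartSqrt_sq hn
  have hs : s ≠ 0 := left_ne_zero_of_mul (hsm ▸ hn)
  have hm : m ≠ 0 := pow_ne_zero_iff two_ne_zero |>.1 (right_ne_zero_of_mul (hsm ▸ hn))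
  have hpos : 0 < s * φ s * (m * φ m) := by
    have := Nat.totient_pos.2 (Nat.pos_of_ne_zero hs)
    have := Nat.totient_pos.2 (Nat.pos_of_ne_zero hm)
    positivity
  have hle : s * φ s * (m * φ m) ≤ N * kappaN N n * φ n := by
    calc s * φ s * (m * φ m) = s * (φ s * (m * φ m)) := mul_assoc _ _ _
      _ ≤ N * kappaN N n * φ (s * m ^ 2) := Nat.mul_le_mul
          (Nat.squarefreePart_le_mul_kappaN hN n) (Nat.totient_mul_mul_totient_le s m)
      _ = N * kappaN N n * φ n := by rw [hsm]
  calc 1 / ((kappaN N n : ℝ) * φ n) = N / ((N * kappaN N n * φ n : ℕ) : ℝ) := by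
        rw [Nat.cast_mul, Nat.cast_mul, mul_assoc, div_mul_cancel_left₀ (by exact_mod_cast hN),
          one_div]
    _ ≤ N / ((s * φ s * (m * φ m) : ℕ) : ℝ) :=
        div_le_div_of_nonneg_left (by positivity) (by exact_mod_cast hpos) (by exact_mod_cast hle)
    _ = _ := by push_cast; ring

theorem summable_one_div_mul_totient_mul_ite (t : ℕ → ℝ) :
    Summable fun p : ℕ × ℕ => 1 / ((p.1 : ℝ) * φ p.1)
      * (if t p.1 < p.2 then 1 / ((p.2 : ℝ) * φ p.2) else 0) := by
  have hb := summable_one_div_mul_totient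
  refine (hb.mul_of_nonneg hb (fun _ => by positivity) fun _ => by positivity).of_nonneg_of_le
    (fun p => by split_ifs <;> positivity) fun p => ?_
  gcongr
  split_ifs
  exacts [le_rfl, by positivity]

theorem Real.sqrt_div_sqrt_lt_of_lt_mul_sq {U s m : ℝ} (hU : 0 ≤ U) (hs : 0 < s) (hm : 0 ≤ m)
    (h : U < s * m ^ 2) : √U / √s < m := by
  rw [div_lt_iff₀ (Real.sqrt_pos.2 hs), mul_comm, ← Real.sqrt_sq hm, ← Real.sqrt_mul hs.le]
  exact Real.sqrt_lt_sqrt hU h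

theorem tsum_kappaN_tail_le_mul_tsum_pairs {N : ℕ} (hN : N ≠ 0) (U : ℕ) :
    (∑' n : ℕ, if n ≤ U then (0 : ℝ) else 1 / ((kappaN N n : ℝ) * (Nat.totient n)))
      ≤ N * ∑' p : ℕ × ℕ, 1 / ((p.1 : ℝ) * φ p.1)
          * (if √U / √p.1 < p.2 then 1 / ((p.2 : ℝ) * φ p.2) else 0) := by
  rw [← tsum_mul_left]
  refine tsum_le_tsum_of_injOn (fun n => (n.squarefreePart, n.squarePartSqrt)) ?_
    (fun n => by split_ifs <;> positivity) (fun p => by split_ifs <;> positivity)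
    ((summable_one_div_mul_totient_mul_ite fun s => √U / √s).mul_left (N : ℝ)) fun n => ?_
  · have hne : ∀ n ∈ Function.support
        (fun n : ℕ => if n ≤ U then (0 : ℝ) else 1 / ((kappaN N n : ℝ) * φ n)), n ≠ 0 :=
      fun n hn h0 => hn (by simp [h0])
    intro n₁ h₁ n₂ h₂ h
    simp only [Prod.mk.injEq] at h
    rw [← Nat.squarefreePart_mul_squarePartSqrt_sq (hne n₁ h₁),
      ← Nat.squarefreePart_mul_squarePartSqrt_sq (hne n₂ h₂), h.1, h.2]
  by_cases hnU : n ≤ U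
  · rw [if_pos hnU]
    split_ifs <;> positivity
  have hn : n ≠ 0 := by omega
  have hsm := Nat.squarefreePart_mul_squarePartSqrt_sq hn
  have hs : n.squarefreePart ≠ 0 := left_ne_zero_of_mul (hsm ▸ hn)
  have hcond : √U / √n.squarefreePart < n.squarePartSqrt :=
    Real.sqrt_div_sqrt_lt_of_lt_mul_sq (Nat.cast_nonneg _) (by positivity) (Nat.cast_nonneg _)
      (by exact_mod_cast hsm ▸ Nat.lt_of_not_le hnU)
  rw [if_neg hnU, if_pos hcond]
  exact one_div_kappaN_mul_totient_le hN hn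

theorem tsum_one_div_mul_totient_pairs_tail_le {U : ℝ} (hU : 0 < U) :
    ∑' p : ℕ × ℕ, 1 / ((p.1 : ℝ) * φ p.1)
        * (if √U / √p.1 < p.2 then 1 / ((p.2 : ℝ) * φ p.2) else 0)
      ≤ 2 * (∑' k : ℕ, 1 / ((k : ℝ) * φ k)) * (∑' s : ℕ, 1 / (√s * φ s)) / √U := by
  set B := ∑' k : ℕ, 1 / ((k : ℝ) * φ k)
  have hS : Summable fun s : ℕ => 1 / (√s * φ s) :=
    (summable_one_div_rpow_mul_totient one_half_pos).congr fun s => by rw [Real.sqrt_eq_rpow]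
  have hGs := summable_one_div_mul_totient_mul_ite fun s => √U / √s
  have hrow : ∀ s : ℕ, ∑' m : ℕ, 1 / ((s : ℝ) * φ s)
      * (if √U / √s < m then 1 / ((m : ℝ) * φ m) else 0) ≤ 2 * B / √U * (1 / (√s * φ s)) := by
    intro s
    rcases eq_or_ne s 0 with rfl | hs
    · simp
    have hs' : (0 : ℝ) < √s := by positivity
    rw [tsum_mul_left]
    calc 1 / ((s : ℝ) * φ s) * ∑' m : ℕ, (if √U / √s < m then 1 / ((m : ℝ) * φ m) else 0)
        ≤ 1 / ((s : ℝ) * φ s) * (2 / (√U / √s) * B) := by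
          gcongr
          exact tsum_one_div_mul_totient_tail_le (by positivity)
      _ = 2 * B / √U * (1 / (√s * φ s)) := by
          field_simp
          rw [Real.sq_sqrt (Nat.cast_nonneg _)]
  calc _ = ∑' s : ℕ, ∑' m : ℕ, 1 / ((s : ℝ) * φ s)
        * (if √U / √s < m then 1 / ((m : ℝ) * φ m) else 0) := hGs.tsum_prod
    _ ≤ ∑' s : ℕ, 2 * B / √U * (1 / (√s * φ s)) := hGs.prod.tsum_le_tsum hrow (hS.mul_left _)
    _ = _ := by rw [tsum_mul_left]; ring

/-- For fixed `N ≥ 1`, `Σ_{n > U} 1/(κ_N(n)·φ(n)) ≪_N 1/√U` for `U ≥ 1`. -/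
theorem stmt5 (N : ℕ) (hN : 1 ≤ N) :
    ∃ C : ℝ, ∀ U : ℕ, 1 ≤ U →
      (∑' n : ℕ, if n ≤ U then (0 : ℝ)
        else 1 / ((kappaN N n : ℝ) * (Nat.totient n)))
        ≤ C / Real.sqrt U := by
  refine ⟨N * (2 * (∑' k : ℕ, 1 / ((k : ℝ) * φ k)) * ∑' s : ℕ, 1 / (√s * φ s)),
    fun U hU => ?_⟩
  calc _ ≤ _ := tsum_kappaN_tail_le_mul_tsum_pairs (Nat.one_le_iff_ne_zero.1 hN) U
    _ ≤ N * (2 * (∑' k : ℕ, 1 / ((k : ℝ) * φ k)) * (∑' s : ℕ, 1 / (√s * φ s)) / √U) := by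
        gcongr
        exact tsum_one_div_mul_totient_pairs_tail_le (by positivity)
    _ = _ := mul_div_assoc _ _ _ |>.symm
end

section
/- For any odd prime ℓ and integers r, k with ℓ ∤ 2rk, and any positive integer e, the sum Σ_{a ∈ ℤ/ℓℤ} (a/ℓ)^e · [ ((r²−ak²)/ℓ)² + ((r²−ak²)/ℓ) ] equals ℓ−3 if e is even and −(1 + (−1/ℓ)) if e is odd, where (·/ℓ) is the Legendre symbol. -/
/-!
Write `χ` for the quadratic character. The substitution `a = (r/k)² y` leaves `χ a` unchanged and
turns `r² - a k²` into `r² (1 - y)`, so the sum does not depend on `r` and `k`. Since `χ ^ e` is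
the trivial character for even `e` and `χ` itself for odd `e`, the normalized sum is the sum of
the Jacobi sums `J(χ^e, χ²) + J(χ^e, χ)`, that is `J(1, 1) + J(1, χ) = (ℓ - 2) - 1` or
`J(χ, 1) + J(χ, χ⁻¹) = -1 - χ(-1)`.
-/

open Finset

lemma sum_range_eq_sum_zmod {M : Type*} [AddCommMonoid M] {n : ℕ} [NeZero n] (f : ZMod n → M) :
    ∑ a ∈ range n, f a = ∑ x : ZMod n, f x :=
  sum_nbij' (fun a => (a : ZMod n)) ZMod.val (fun _ _ => mem_univ _)
    (fun x _ => mem_range.mpr x.val_lt) (fun _ ha => ZMod.val_cast_of_lt (mem_range.mp ha))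
    (fun x _ => ZMod.natCast_zmod_val x) (fun _ _ => rfl)

namespace MulChar

lemma sum_pow_mul_sq_add_eq_jacobiSum {F R : Type*} [CommRing F] [Fintype F] [CommRing R]
    (χ : MulChar F R) {e : ℕ} (he : e ≠ 0) :
    ∑ y, χ y ^ e * (χ (1 - y) ^ 2 + χ (1 - y)) =
      jacobiSum (χ ^ e) (χ ^ 2) + jacobiSum (χ ^ e) χ := by
  simp only [jacobiSum, pow_apply' χ he, pow_apply' χ two_ne_zero, mul_add, sum_add_distrib]

variable {F R : Type*} [Field F] [CommRing R]

lemma IsQuadratic.apply_sq_mul {χ : MulChar F R} (hχ : χ.IsQuadratic) {s : F} (hs : s ≠ 0)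
    (x : F) : χ (s ^ 2 * x) = χ x := by
  rw [map_mul, map_pow, ← pow_apply' χ two_ne_zero, hχ.sq_eq_one, one_apply hs.isUnit, one_mul]

variable [Fintype F]

lemma IsQuadratic.sum_apply_sq_sub_mul_sq {M : Type*} [AddCommMonoid M] {χ : MulChar F R}
    (hχ : χ.IsQuadratic) {r k : F} (hr : r ≠ 0) (hk : k ≠ 0) (f : R → R → M) :
    ∑ x, f (χ x) (χ (r ^ 2 - x * k ^ 2)) = ∑ y, f (χ y) (χ (1 - y)) := by
  have hs : r / k ≠ 0 := div_ne_zero hr hk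
  refine (Fintype.sum_bijective _ (mulLeft_bijective₀ _ (pow_ne_zero 2 hs)) _ _
    fun y => ?_).symm
  have : r ^ 2 - (r / k) ^ 2 * y * k ^ 2 = r ^ 2 * (1 - y) := by field_simp
  rw [this, hχ.apply_sq_mul hs, hχ.apply_sq_mul hr]

lemma IsQuadratic.sum_pow_mul_sq_add [IsDomain R] {χ : MulChar F R} (hχ : χ.IsQuadratic)
    (hχ1 : χ ≠ 1) {e : ℕ} (he : e ≠ 0) :
    ∑ y, χ y ^ e * (χ (1 - y) ^ 2 + χ (1 - y)) =
      if Even e then (Fintype.card F : R) - 3 else -(1 + χ (-1)) := by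
  rw [sum_pow_mul_sq_add_eq_jacobiSum χ he, hχ.sq_eq_one]
  split_ifs with he_even
  · rw [hχ.pow_even he_even, jacobiSum_one_one, jacobiSum_one_nontrivial hχ1]
    ring
  · have hJ := jacobiSum_nontrivial_inv hχ1
    rw [hχ.inv] at hJ
    rw [hχ.pow_odd (Nat.not_even_iff_odd.mp he_even), jacobiSum_comm,
      jacobiSum_one_nontrivial hχ1, hJ]
    ring

end MulChar

/-- For an odd prime `ℓ ∤ 2rk` and `e ≥ 1`,
`Σ_{a mod ℓ} (a/ℓ)^e·[((r²−ak²)/ℓ)² + ((r²−ak²)/ℓ)]` equals `ℓ−3` for even `e`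
and `−(1+(−1/ℓ))` for odd `e`. -/
theorem stmt6 (ℓ : ℕ) [Fact ℓ.Prime] (hℓ : ℓ ≠ 2) (r k : ℤ)
    (h : ¬ ((ℓ : ℤ) ∣ 2 * r * k)) (e : ℕ) (he : 1 ≤ e) :
    (∑ a ∈ Finset.range ℓ,
        (legendreSym ℓ (a : ℤ)) ^ e *
          ((legendreSym ℓ (r ^ 2 - (a : ℤ) * k ^ 2)) ^ 2 +
            legendreSym ℓ (r ^ 2 - (a : ℤ) * k ^ 2)))
      = if Even e then (ℓ : ℤ) - 3 else -(1 + legendreSym ℓ (-1)) := by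
  have hr : (r : ZMod ℓ) ≠ 0 := by
    rw [ne_eq, ZMod.intCast_zmod_eq_zero_iff_dvd]
    exact fun hd => h ((hd.mul_left 2).mul_right k)
  have hk : (k : ZMod ℓ) ≠ 0 := by
    rw [ne_eq, ZMod.intCast_zmod_eq_zero_iff_dvd]
    exact fun hd => h (hd.mul_left (2 * r))
  set χ := quadraticChar (ZMod ℓ)
  have hχ : χ.IsQuadratic := quadraticChar_isQuadratic _
  have hχ1 : χ ≠ 1 := quadraticChar_ne_one (by rwa [ZMod.ringChar_zmod_n])
  simp only [legendreSym, Int.cast_sub, Int.cast_pow, Int.cast_mul, Int.cast_natCast,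
    Int.cast_neg, Int.cast_one]
  rw [sum_range_eq_sum_zmod fun x => χ x ^ e * (χ (r ^ 2 - x * k ^ 2) ^ 2 + χ (r ^ 2 - x * k ^ 2)),
    hχ.sum_apply_sq_sub_mul_sq hr hk fun u v => u ^ e * (v ^ 2 + v),
    hχ.sum_pow_mul_sq_add hχ1 (by omega), ZMod.card]
end
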